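/- Let H = 2P_1+2P_2 (two isolated vertices together with two disjoint edges). For every black-and-white labelling ℓ of H, the bipartite complement of H with respect to ℓ contains an induced subgraph isomorphic to the cycle C_4; in particular, this bipartite complement does not belong to the class S. -/

import Mathlib

/-!
Each edge of `2P₁ + 2P₂` has a black and a white end, and the isolated vertices `0, 1` are
adjacent in the bipartite complement to every vertex of the other colour. Two black and two white
vertices with no edge of `H` between the colours span an induced `C₄` of the bipartite complement;
such a quadruple is formed by `0`, `1` and suitable ends of the two edges (after swapping the
colours, `0` is black).

A `C₄` lies in a single component, and no component of a graph in `S` contains one: numbering the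
vertices of a path or subdivided claw as usual, every vertex has at most one smaller neighbour,
whereas the largest vertex of a cycle has two.
-/

open SimpleGraph

/-- `B` is the black colour class of a black-and-white labelling of `H`:
every edge of `H` joins a vertex of `B` to a vertex outside `B`
(equivalently, `B` and its complement `Bᶜ` are both independent sets,
i.e. `(B, Bᶜ)` is a bipartition of `H` into two possibly empty independent sets). -/
def IsBWLabelling {V : Type*} (H : SimpleGraph V) (B : Set V) : Prop :=
  ∀ ⦃u v : V⦄, H.Adj u v → (u ∈ B ↔ v ∉ B)

/-- `H` with black class `BH` is a labelled induced subgraph of `G` with black class `BG`: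
there is an injective map preserving both adjacency and non-adjacency which maps
black vertices to black vertices and white vertices to white vertices. -/
def LabelledIndSubgraph {VH VG : Type*} (H : SimpleGraph VH) (BH : Set VH)
    (G : SimpleGraph VG) (BG : Set VG) : Prop :=
  ∃ f : VH → VG, Function.Injective f ∧
    (∀ u v : VH, H.Adj u v ↔ G.Adj (f u) (f v)) ∧
    (∀ u : VH, u ∈ BH ↔ f u ∈ BG)

/-- `G` is strongly `H^ℓ`-free, where `BH` is the black class of the labelling `ℓ`:
there is no bipartition `(BG, BGᶜ)` of `G` such that `H^ℓ` is a labelled induced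
subgraph of `(BG, BGᶜ, E_G)`. -/
def StronglyFree {VG VH : Type*} (G : SimpleGraph VG) (H : SimpleGraph VH)
    (BH : Set VH) : Prop :=
  ¬ ∃ BG : Set VG, IsBWLabelling G BG ∧ LabelledIndSubgraph H BH G BG

/-- `G` is weakly `H^ℓ`-free, where `BH` is the black class of the labelling `ℓ`:
it is not the case that `H^ℓ` is a labelled induced subgraph of `(BG, BGᶜ, E_G)`
for every bipartition `(BG, BGᶜ)` of `G`. -/
def WeaklyFree {VG VH : Type*} (G : SimpleGraph VG) (H : SimpleGraph VH)
    (BH : Set VH) : Prop :=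
  ¬ ∀ BG : Set VG, IsBWLabelling G BG → LabelledIndSubgraph H BH G BG

/-- `G` is `H`-free: `G` contains no induced subgraph isomorphic to `H`. -/
def HFree {VG VH : Type*} (G : SimpleGraph VG) (H : SimpleGraph VH) : Prop :=
  ¬ ∃ f : VH → VG, Function.Injective f ∧ ∀ u v : VH, H.Adj u v ↔ G.Adj (f u) (f v)

/-- The bipartite complement of `H` with respect to the black-and-white labelling
with black class `B`: a black vertex and a white vertex are adjacent if and only if
they are non-adjacent in `H`, and no two vertices of the same colour are adjacent. -/
def bipComplement {V : Type*} (H : SimpleGraph V) (B : Set V) : SimpleGraph V :=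
  SimpleGraph.fromRel (fun u v => u ∈ B ∧ v ∉ B ∧ ¬ H.Adj u v)

/-- The subdivided claw `S_{h,i,j}` (for `1 ≤ h ≤ i ≤ j`): the tree with one centre
vertex `0` of degree `3` and three paths attached to it, with leaves at distance
`h`, `i` and `j` from the centre. The vertices of the three paths are
`1, …, h`, `h+1, …, h+i` and `h+i+1, …, h+i+j`, respectively. -/
def subdividedClaw (h i j : ℕ) : SimpleGraph (Fin (h + i + j + 1)) :=
  SimpleGraph.fromRel (fun a b =>
    (a.val = 0 ∧ (b.val = 1 ∨ b.val = h + 1 ∨ b.val = h + i + 1)) ∨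
    (1 ≤ a.val ∧ b.val = a.val + 1 ∧
      (b.val ≤ h ∨ (h + 1 ≤ a.val ∧ b.val ≤ h + i) ∨
        (h + i + 1 ≤ a.val ∧ b.val ≤ h + i + j))))

/-- `H` belongs to the class `S`: every connected component of `H` is isomorphic
to a path `P_r` for some `r ≥ 1` or to a subdivided claw `S_{h,i,j}` for some
`1 ≤ h ≤ i ≤ j`. -/
def InClassS {V : Type*} (H : SimpleGraph V) : Prop :=
  ∀ c : H.ConnectedComponent,
    (∃ r : ℕ, 1 ≤ r ∧ Nonempty ((H.induce c.supp) ≃g SimpleGraph.pathGraph r)) ∨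
    (∃ h i j : ℕ, 1 ≤ h ∧ h ≤ i ∧ i ≤ j ∧
      Nonempty ((H.induce c.supp) ≃g subdividedClaw h i j))

/-- The graph `2P_1 + 2P_2`: vertices `0, 1` isolated, edges `23` and `45`. -/
def g2P1'2P2 : SimpleGraph (Fin 6) := SimpleGraph.fromEdgeSet {s(2, 3), s(4, 5)}

namespace SimpleGraph

variable {V W : Type*}

def LowerNeighborsSubsingleton [LinearOrder V] (G : SimpleGraph V) : Prop :=
  ∀ v, {a | G.Adj v a ∧ a < v}.Subsingleton

open Fin.CommRing in
theorem LowerNeighborsSubsingleton.isEmpty_cycleGraph_embedding [LinearOrder W]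
    {G : SimpleGraph W} (hG : G.LowerNeighborsSubsingleton) (n : ℕ) :
    IsEmpty (cycleGraph (n + 3) ↪g G) := by
  refine ⟨fun e => ?_⟩
  obtain ⟨k, -, hk⟩ := Finset.exists_max_image Finset.univ e Finset.univ_nonempty
  have lower : ∀ j, (cycleGraph (n + 3)).Adj k j → G.Adj (e k) (e j) ∧ e j < e k :=
    fun j hj => ⟨e.map_rel_iff.mpr hj,
      (hk j (Finset.mem_univ j)).lt_of_ne (e.injective.ne hj.ne.symm)⟩
  have hsucc := lower (k + 1) (cycleGraph_adj.mpr (Or.inr (add_sub_cancel_left k 1)))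
  have hpred := lower (k - 1) (cycleGraph_adj.mpr (Or.inl (sub_sub_cancel k 1)))
  have h : k + 1 = k - 1 := e.injective (hG (e k) hsucc hpred)
  have h2 : (2 : Fin (n + 3)) = 0 := by linear_combination h
  exact absurd (congrArg Fin.val h2) (by simp [Nat.mod_eq_of_lt (show 2 < n + 3 by omega)])

theorem lowerNeighborsSubsingleton_pathGraph (n : ℕ) :
    (pathGraph n).LowerNeighborsSubsingleton := by
  intro v a ha b hb
  simp only [Set.mem_ofPred_eq, pathGraph_adj, Fin.lt_def] at ha hb
  exact Fin.ext (by omega)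

theorem lowerNeighborsSubsingleton_subdividedClaw (h i j : ℕ) :
    (subdividedClaw h i j).LowerNeighborsSubsingleton := by
  intro v a ha b hb
  simp only [Set.mem_ofPred_eq, subdividedClaw, fromRel_adj, Fin.lt_def, ne_eq, Fin.ext_iff]
    at ha hb
  exact Fin.ext (by omega)

theorem exists_embedding_induce_connectedComponent {H : SimpleGraph V} {G : SimpleGraph W}
    (hH : H.Connected) (e : H ↪g G) :
    ∃ c : G.ConnectedComponent, Nonempty (H ↪g G.induce c.supp) := by
  obtain ⟨v⟩ := hH.nonempty
  refine ⟨G.connectedComponentMk (e v),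
    ⟨(G.induceHomOfLE ?_).comp e.isoInduceRange.toEmbedding⟩⟩
  rintro _ ⟨u, rfl⟩
  exact ConnectedComponent.sound ((hH.preconnected u v).map e.toHom)

end SimpleGraph

theorem not_inClassS_of_cycleGraph_embedding {W : Type*} {G : SimpleGraph W} {n : ℕ}
    (e : cycleGraph (n + 3) ↪g G) : ¬ InClassS G := by
  intro hS
  obtain ⟨c, ⟨e'⟩⟩ := exists_embedding_induce_connectedComponent cycleGraph_connected e
  rcases hS c with ⟨r, -, ⟨φ⟩⟩ | ⟨h, i, j, -, -, -, ⟨φ⟩⟩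
  · exact ((lowerNeighborsSubsingleton_pathGraph r).isEmpty_cycleGraph_embedding n).false
      (φ.toEmbedding.comp e')
  · exact ((lowerNeighborsSubsingleton_subdividedClaw h i j).isEmpty_cycleGraph_embedding n).false
      (φ.toEmbedding.comp e')

section BipComplement

variable {V : Type*} {H : SimpleGraph V} {B : Set V}

theorem bipComplement_adj {u v : V} :
    (bipComplement H B).Adj u v ↔ (u ∈ B ↔ v ∉ B) ∧ ¬ H.Adj u v := by
  rw [bipComplement, fromRel_adj, H.adj_comm v u]
  constructor
  · rintro ⟨-, ⟨hu, hv, huv⟩ | ⟨hv, hu, huv⟩⟩ <;> exact ⟨by tauto, huv⟩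
  · rintro ⟨hB, huv⟩
    exact ⟨fun h => by subst h; tauto, by tauto⟩

theorem bipComplement_compl : bipComplement H Bᶜ = bipComplement H B := by
  ext u v
  simp only [bipComplement_adj, Set.mem_compl_iff, not_not]
  tauto

theorem IsBWLabelling.compl (hB : IsBWLabelling H B) : IsBWLabelling H Bᶜ := fun _ _ huv => by
  simp only [Set.mem_compl_iff, not_not, hB huv]

theorem IsBWLabelling.exists_mem (hB : IsBWLabelling H B) {u v : V} (huv : H.Adj u v) :
    ∃ x, (x = u ∨ x = v) ∧ x ∈ B := by
  by_cases hu : u ∈ B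
  · exact ⟨u, Or.inl rfl, hu⟩
  · exact ⟨v, Or.inr rfl, not_not.mp (mt (hB huv).mpr hu)⟩

theorem IsBWLabelling.exists_not_mem (hB : IsBWLabelling H B) {u v : V} (huv : H.Adj u v) :
    ∃ x, (x = u ∨ x = v) ∧ x ∉ B :=
  hB.compl.exists_mem huv

theorem nonempty_cycleGraph_embedding_bipComplement {x y u w : V} (hx : x ∈ B) (hy : y ∈ B)
    (hu : u ∉ B) (hw : w ∉ B) (hxy : x ≠ y) (huw : u ≠ w) (hxu : ¬ H.Adj x u)
    (hxw : ¬ H.Adj x w) (hyu : ¬ H.Adj y u) (hyw : ¬ H.Adj y w) :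
    Nonempty (cycleGraph 4 ↪g bipComplement H B) := by
  have hne : ∀ {a b}, a ∈ B → b ∉ B → a ≠ b := fun ha hb h => hb (h ▸ ha)
  refine ⟨⟨⟨![x, u, y, w], ?_⟩, ?_⟩⟩
  · intro a b hab
    fin_cases a <;> fin_cases b <;> simp_all [hne hx hu, hne hx hw, hne hy hu, hne hy hw]
  · intro a b
    show (bipComplement H B).Adj (![x, u, y, w] a) (![x, u, y, w] b) ↔ (cycleGraph 4).Adj a b
    fin_cases a <;> fin_cases b <;>
      simp_all +decide [bipComplement_adj, H.adj_comm]

end BipComplement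

theorem g2P1'2P2_adj {u v : Fin 6} :
    g2P1'2P2.Adj u v ↔ u ≠ v ∧ 2 ≤ u.val ∧ u.val / 2 = v.val / 2 := by
  rw [g2P1'2P2, fromEdgeSet_adj]
  fin_cases u <;> fin_cases v <;> simp

instance : DecidableRel g2P1'2P2.Adj := fun _ _ => decidable_of_iff _ g2P1'2P2_adj.symm

theorem nonempty_cycleGraph_embedding_bipComplement_g2P1'2P2 {B : Set (Fin 6)}
    (hB : IsBWLabelling g2P1'2P2 B) (h0 : 0 ∈ B) :
    Nonempty (cycleGraph 4 ↪g bipComplement g2P1'2P2 B) := by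
  obtain ⟨w, hw, hwB⟩ := hB.exists_not_mem (u := 4) (v := 5) (by decide)
  by_cases h1 : 1 ∈ B
  · obtain ⟨w', hw', hw'B⟩ := hB.exists_not_mem (u := 2) (v := 3) (by decide)
    rcases hw' with rfl | rfl <;> rcases hw with rfl | rfl <;>
      apply nonempty_cycleGraph_embedding_bipComplement h0 h1 hw'B hwB <;> decide
  · obtain ⟨b, hb, hbB⟩ := hB.exists_mem (u := 2) (v := 3) (by decide)
    rcases hb with rfl | rfl <;> rcases hw with rfl | rfl <;>
      apply nonempty_cycleGraph_embedding_bipComplement h0 hbB h1 hwB <;> decide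

/-- For every black-and-white labelling of `2P_1 + 2P_2`, the bipartite complement
of `2P_1 + 2P_2` with respect to it contains an induced subgraph isomorphic to the
cycle `C_4`; in particular, this bipartite complement does not belong to the
class `S`. -/
theorem stmt_10 (B : Set (Fin 6)) (hB : IsBWLabelling g2P1'2P2 B) :
    Nonempty (SimpleGraph.cycleGraph 4 ↪g bipComplement g2P1'2P2 B) ∧
    ¬ InClassS (bipComplement g2P1'2P2 B) := by
  obtain ⟨e⟩ : Nonempty (cycleGraph 4 ↪g bipComplement g2P1'2P2 B) := by
    by_cases h0 : (0 : Fin 6) ∈ B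
    · exact nonempty_cycleGraph_embedding_bipComplement_g2P1'2P2 hB h0
    · rw [← bipComplement_compl]
      exact nonempty_cycleGraph_embedding_bipComplement_g2P1'2P2 hB.compl h0
  exact ⟨⟨e⟩, not_inClassS_of_cycleGraph_embedding e⟩
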